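/- Let θ ≥ 0, r, s > 0 with r + s > 4, and suppose f : X → Y satisfies f(0) = 0 and ‖f(nx+y) + f(nx−y) − n²f(x+y) − n²f(x−y) − 2f(nx) + 2n²f(x) + 2(n²−1)f(y)‖ ≤ θ‖x‖^r‖y‖^s for all x, y ∈ X. Then there exist a unique quadratic function Q : X → Y and a unique quartic function T : X → Y and a constant K (depending on n, r, s, θ) such that ‖f(x) − Q(x) − T(x)‖ ≤ K‖x‖^{r+s} for all x ∈ X. -/

import Mathlib

/-!
Write `D = quadDefect f`, `ν = n` and `p = r + s`. The hypothesis says that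
`D (ν • x) y - ν ^ 2 • D x y = O(‖(x, y)‖ ^ p)`, and at `x = 0` it forces `f` to be even.
Scaling the symmetric second difference of `D` in two ways shows
`D (2 • x) y - 4 • D x y = O(‖(x, y)‖ ^ p)`; summing second differences along `x, 2x, …, |n|x`
then gives `f (ν • x) - ν ^ 2 • f x = (ν ^ 4 - ν ^ 2) / 12 • D x x + O(‖x‖ ^ p)`. Consequently
`t = (ν ^ 4 - ν ^ 2)⁻¹ • (f (ν • ·) - ν ^ 2 • f)` and `q = f - t` satisfy
`t (ν • x) - ν ^ 4 • t x = O(‖x‖ ^ p)` and `q (ν • x) - ν ^ 2 • q x = O(‖x‖ ^ p)`, and the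
direct method (limits of `c ^ k • g ((ν ^ k)⁻¹ • x)`) produces `T` and `Q`, homogeneous of
degree `4` and `2`, with `t - T` and `q - Q` in `O(‖x‖ ^ p)`. The quartic defect of `T` and the
quadratic defect of `Q` are then homogeneous of degree `4`, resp. `2`, and `O(‖(x, y)‖ ^ p)` with
`p > 4`, hence zero. For uniqueness, the difference of two solutions is
`(Q - Q') + (T - T') = O(‖x‖ ^ p)`, whose summands scale by `4` and `16` under `x ↦ 2 • x`;
both must vanish.
-/

open Function Asymptotics Filter Topology

section Algebra

variable {X Y : Type*} [AddCommGroup X] [AddCommGroup Y] [Module ℝ Y]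

def quadDefect (g : X → Y) (x y : X) : Y :=
  g (x + y) + g (x - y) - (2 : ℝ) • g x - (2 : ℝ) • g y

variable {g : X → Y}

theorem quadDefect_eq_zero_iff {x y : X} :
    quadDefect g x y = 0 ↔ g (x + y) + g (x - y) = (2 : ℤ) • g x + (2 : ℤ) • g y := by
  rw [quadDefect, sub_sub, sub_eq_zero, ← Int.cast_smul_eq_zsmul ℝ, ← Int.cast_smul_eq_zsmul ℝ,
    Int.cast_ofNat]

theorem quadDefect_sub {h : X → Y} (x y : X) :
    quadDefect (fun v => g v - h v) x y = quadDefect g x y - quadDefect h x y := by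
  simp only [quadDefect]
  module

theorem quadDefect_comm (hg : g.Even) (x y : X) : quadDefect g x y = quadDefect g y x := by
  rw [quadDefect, quadDefect, add_comm y x, ← neg_sub x y, hg]
  abel

theorem quadDefect_zero_left (hg : g.Even) (h0 : g 0 = 0) (y : X) : quadDefect g 0 y = 0 := by
  rw [quadDefect, zero_add, zero_sub, hg, h0, smul_zero]
  module

theorem even_quadDefect_left (hg : g.Even) (w : X) : (quadDefect g · w).Even := by
  intro a
  have h₁ : -a + w = -(a - w) := by abel
  have h₂ : -a - w = -(a + w) := by abel
  simp only [quadDefect]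
  rw [hg a, h₁, h₂, hg, hg]
  abel

theorem quadDefect_quadDefect_swap (hg : g.Even) (x z w : X) :
    quadDefect (quadDefect g · w) x z = quadDefect (quadDefect g · z) x w := by
  simp only [quadDefect]
  rw [add_right_comm x z w, add_sub_right_comm x z w, sub_add_eq_add_sub x z w,
    sub_right_comm x z w, add_comm z w, ← neg_sub w z, hg]
  module

variable [Module ℝ X]

def quarticDefect (g : X → Y) (x y : X) : Y :=
  g ((2 : ℝ) • x + y) + g ((2 : ℝ) • x - y) - (4 : ℝ) • g (x + y) - (4 : ℝ) • g (x - y)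
    - (24 : ℝ) • g x + (6 : ℝ) • g y

def nDefect (g : X → Y) (ν : ℝ) (x y : X) : Y :=
  quadDefect g (ν • x) y - ν ^ 2 • quadDefect g x y

-- If `g = Q + T` with `Q (ν • x) = ν ^ 2 • Q x` and `T (ν • x) = ν ^ 4 • T x`, this is `T`.
noncomputable def quarticPart (g : X → Y) (ν : ℝ) (x : X) : Y :=
  (ν ^ 4 - ν ^ 2)⁻¹ • (g (ν • x) - ν ^ 2 • g x)

variable {ν : ℝ}

theorem quarticDefect_eq_zero_iff {x y : X} :
    quarticDefect g x y = 0 ↔ g ((2 : ℤ) • x + y) + g ((2 : ℤ) • x - y) =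
      (4 : ℤ) • g (x + y) + (4 : ℤ) • g (x - y) + (24 : ℤ) • g x - (6 : ℤ) • g y := by
  simp only [← Int.cast_smul_eq_zsmul ℝ, Int.cast_ofNat]
  rw [← sub_eq_zero (a := g ((2 : ℝ) • x + y) + _), quarticDefect]
  constructor <;> intro h <;> rw [← h] <;> abel

theorem nDefect_intCast (n : ℤ) (x y : X) :
    nDefect g n x y = g (n • x + y) + g (n • x - y) - (n ^ 2) • g (x + y)
      - (n ^ 2) • g (x - y) - (2 : ℤ) • g (n • x) + (2 * n ^ 2) • g x
      + (2 * (n ^ 2 - 1)) • g y := by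
  simp only [nDefect, quadDefect, ← Int.cast_smul_eq_zsmul ℝ]
  push_cast
  module

theorem quarticDefect_sub {h : X → Y} (x y : X) :
    quarticDefect (fun v => g v - h v) x y = quarticDefect g x y - quarticDefect h x y := by
  simp only [quarticDefect]
  module

theorem quadDefect_smul_smul_of_map_smul {a c : ℝ} (hg : ∀ v, g (a • v) = c • g v) (x y : X) :
    quadDefect g (a • x) (a • y) = c • quadDefect g x y := by
  simp only [quadDefect, ← smul_add, ← smul_sub, hg]
  module

theorem quarticDefect_smul_smul_of_map_smul {a c : ℝ} (hg : ∀ v, g (a • v) = c • g v)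
    (x y : X) : quarticDefect g (a • x) (a • y) = c • quarticDefect g x y := by
  simp only [quarticDefect, smul_comm (2 : ℝ) a x, ← smul_add, ← smul_sub, hg]
  module

theorem map_two_smul_of_quadDefect_eq_zero (hg : ∀ x y, quadDefect g x y = 0) (v : X) :
    g ((2 : ℝ) • v) = (4 : ℝ) • g v := by
  have h0 : g 0 = 0 := by
    have h := hg 0 0
    rw [quadDefect, add_zero, sub_zero] at h
    have : (2 : ℝ) • g 0 = 0 := by linear_combination (norm := module) -h
    exact (smul_eq_zero.mp this).resolve_left two_ne_zero
  have h := hg v v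
  rw [quadDefect, sub_self, h0, ← two_smul ℝ v] at h
  linear_combination (norm := module) h

theorem map_two_smul_of_quarticDefect_eq_zero (hg : ∀ x y, quarticDefect g x y = 0) (v : X) :
    g ((2 : ℝ) • v) = (16 : ℝ) • g v := by
  have h0 : g 0 = 0 := by
    have h := hg 0 0
    simp only [quarticDefect, smul_zero, add_zero, sub_zero] at h
    have : (24 : ℝ) • g 0 = 0 := by linear_combination (norm := module) -h
    exact (smul_eq_zero.mp this).resolve_left (by norm_num)
  have h := hg v 0
  simp only [quarticDefect, add_zero, sub_zero, h0, smul_zero] at h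
  linear_combination (norm := module) (2⁻¹ : ℝ) • h

theorem even_of_nDefect_zero_left (hν : ν ^ 2 ≠ 1) (h0 : g 0 = 0)
    (h : ∀ y, nDefect g ν 0 y = 0) : g.Even := by
  intro y
  have hy : nDefect g ν 0 y = (1 - ν ^ 2) • (g (-y) - g y) := by
    simp only [nDefect, quadDefect, smul_zero, zero_add, zero_sub, h0]
    module
  rw [h, eq_comm, smul_eq_zero, sub_eq_zero, sub_eq_zero] at hy
  exact hy.resolve_left (Ne.symm hν)

theorem quadDefect_self (h0 : g 0 = 0) (x : X) :
    quadDefect g x x = g ((2 : ℝ) • x) - (4 : ℝ) • g x := by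
  rw [quadDefect, sub_self, h0, ← two_smul ℝ x]
  module

theorem quadDefect_two_smul_sub (hg : g.Even) (h0 : g 0 = 0) (x w : X) :
    quadDefect g ((2 : ℝ) • x) w - (4 : ℝ) • quadDefect g x w =
      quadDefect (quadDefect g · w) x x :=
  (quadDefect_self (g := (quadDefect g · w)) (quadDefect_zero_left hg h0 w) x).symm

theorem quarticDefect_eq_quadDefect (h0 : g 0 = 0) (x y : X) :
    quarticDefect g x y = quadDefect g ((2 : ℝ) • x) y - (4 : ℝ) • quadDefect g x y
      + (2 : ℝ) • quadDefect g x x - (24 : ℝ) • g x := by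
  rw [quadDefect_self h0]
  simp only [quarticDefect, quadDefect]
  module

theorem quadDefect_smul_right (hg : g.Even) (x y : X) :
    quadDefect g x (ν • y) = ν ^ 2 • quadDefect g x y + nDefect g ν y x := by
  rw [quadDefect_comm hg, quadDefect_comm hg x, nDefect]
  abel

theorem quadDefect_smul_smul (hg : g.Even) (x y : X) :
    quadDefect g (ν • x) (ν • y) =
      ν ^ 4 • quadDefect g x y + (nDefect g ν x (ν • y) + ν ^ 2 • nDefect g ν y x) := by
  rw [← sub_add_cancel (quadDefect g (ν • x) (ν • y)) (ν ^ 2 • quadDefect g x (ν • y)),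
    ← nDefect, quadDefect_smul_right hg]
  module

theorem quadDefect_quadDefect_smul (hg : g.Even) (x z w : X) :
    quadDefect (quadDefect g · (ν • w)) x z =
      ν ^ 2 • quadDefect (quadDefect g · w) x z + quadDefect (nDefect g ν w) x z := by
  simp only [quadDefect_smul_right hg]
  simp only [quadDefect]
  module

-- The second difference `S` of `quadDefect g` in its first argument is symmetric, and
-- `S (ν • x) (ν • x) w` scales by `ν ^ 2` when both arguments are scaled at once but by `ν ^ 4`
-- when they are scaled one at a time; the discrepancy consists of `nDefect` terms.
theorem smul_quadDefect_two_smul_sub (hg : g.Even) (h0 : g 0 = 0) (x w : X) :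
    (ν ^ 4 - ν ^ 2) • (quadDefect g ((2 : ℝ) • x) w - (4 : ℝ) • quadDefect g x w) =
      nDefect g ν ((2 : ℝ) • x) w - (4 : ℝ) • nDefect g ν x w
        - ν ^ 2 • quadDefect (nDefect g ν x) w x - quadDefect (nDefect g ν x) w (ν • x) := by
  have hS (a b c : X) : quadDefect (quadDefect g · c) a b = quadDefect (quadDefect g · c) b a :=
    quadDefect_comm (even_quadDefect_left hg c) a b
  have hdiag : quadDefect (quadDefect g · w) (ν • x) (ν • x) =
      ν ^ 2 • quadDefect (quadDefect g · w) x x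
        + (nDefect g ν ((2 : ℝ) • x) w - (4 : ℝ) • nDefect g ν x w) := by
    rw [← quadDefect_two_smul_sub hg h0, ← quadDefect_two_smul_sub hg h0,
      smul_comm (2 : ℝ) ν x, nDefect, nDefect]
    module
  have hscale : quadDefect (quadDefect g · w) (ν • x) (ν • x) =
      ν ^ 4 • quadDefect (quadDefect g · w) x x
        + (ν ^ 2 • quadDefect (nDefect g ν x) w x + quadDefect (nDefect g ν x) w (ν • x)) := by
    rw [quadDefect_quadDefect_swap hg, hS, quadDefect_quadDefect_smul hg,
      quadDefect_quadDefect_swap hg w, quadDefect_quadDefect_smul hg, hS w,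
      quadDefect_quadDefect_swap hg x]
    module
  rw [quadDefect_two_smul_sub hg h0]
  linear_combination (norm := module) hdiag - hscale

theorem quadDefect_smul_left_self (a : ℝ) (x : X) :
    quadDefect g (a • x) x =
      g ((a + 1) • x) + g ((a - 1) • x) - (2 : ℝ) • g (a • x) - (2 : ℝ) • g x := by
  rw [quadDefect, add_smul, one_smul, sub_smul, one_smul]

theorem quadDefect_two_smul_smul_sub (hg : g.Even) (h0 : g 0 = 0) (a : ℝ) (x : X) :
    quadDefect g ((2 : ℝ) • x) (a • x) - (4 : ℝ) • quadDefect g x (a • x) =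
      quadDefect g ((a + 1) • x) x + quadDefect g ((a - 1) • x) x
        - (2 : ℝ) • quadDefect g (a • x) x - (2 : ℝ) • quadDefect g x x := by
  rw [quadDefect_two_smul_sub hg h0, quadDefect_quadDefect_swap hg,
    quadDefect_comm (even_quadDefect_left hg x), quadDefect_smul_left_self]

theorem smul_quarticPart (hν : ν ^ 4 - ν ^ 2 ≠ 0) (x : X) :
    (ν ^ 4 - ν ^ 2) • quarticPart g ν x = g (ν • x) - ν ^ 2 • g x :=
  smul_inv_smul₀ hν _

theorem quadDefect_quarticPart (hg : g.Even) (hν : ν ^ 4 - ν ^ 2 ≠ 0) (x y : X) :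
    quadDefect (quarticPart g ν) x y = quadDefect g x y +
      (ν ^ 4 - ν ^ 2)⁻¹ • (nDefect g ν x (ν • y) + ν ^ 2 • nDefect g ν y x) := by
  have h : quadDefect (quarticPart g ν) x y =
      (ν ^ 4 - ν ^ 2)⁻¹ • (quadDefect g (ν • x) (ν • y) - ν ^ 2 • quadDefect g x y) := by
    simp only [quadDefect, quarticPart, smul_add, smul_sub]
    module
  rw [h, quadDefect_smul_smul hg, add_sub_right_comm, ← sub_smul, smul_add,
    inv_smul_smul₀ hν]

end Algebra

theorem isBigO_of_isBigO_second_difference {α E F : Type*} [SeminormedAddCommGroup E]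
    [Norm F] {l : Filter α} {g : α → F} {u : ℕ → α → E} (h0 : u 0 =O[l] g) (h1 : u 1 =O[l] g)
    (h : ∀ k, (fun x => u (k + 2) x - u (k + 1) x - (u (k + 1) x - u k x)) =O[l] g) (j : ℕ) :
    u j =O[l] g := by
  induction j using Nat.twoStepInduction with
  | zero => exact h0
  | one => exact h1
  | more k hk hk1 => exact (((h k).add (hk1.sub hk)).add hk1).congr_left fun x => by abel

section DirectMethod

variable {E F Y : Type*} [NormedAddCommGroup E] [SeminormedAddCommGroup F] [NormedAddCommGroup Y]
  {p : ℝ}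

theorem isBigO_rpow_norm_iff {g : E → Y} :
    (g =O[⊤] fun v => ‖v‖ ^ p) ↔ ∃ C, ∀ v, ‖g v‖ ≤ C * ‖v‖ ^ p := by
  simp only [isBigO_top, Real.norm_eq_abs, Real.abs_rpow_of_nonneg (norm_nonneg _), abs_norm]

theorem Asymptotics.IsBigO.comp_of_isBigO_id {g : F → Y} {φ : E → F} (hp : 0 ≤ p)
    (hg : g =O[⊤] fun v => ‖v‖ ^ p) (hφ : φ =O[⊤] fun v => v) :
    (fun v => g (φ v)) =O[⊤] fun v => ‖v‖ ^ p :=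
  (hg.comp_tendsto tendsto_top).trans
    (hφ.norm_norm.rpow hp (Eventually.of_forall fun _ => norm_nonneg _))

theorem isBigO_uncurry_of_norm_le {B : E → F → Y} {θ r s : ℝ} (hr : 0 ≤ r) (hs : 0 ≤ s)
    (h : ∀ x y, ‖B x y‖ ≤ θ * ‖x‖ ^ r * ‖y‖ ^ s) :
    uncurry B =O[⊤] fun v : E × F => ‖v‖ ^ (r + s) := by
  refine isBigO_top.mpr ⟨|θ|, fun v => ?_⟩
  have hx : ‖v.1‖ ^ r ≤ ‖v‖ ^ r := Real.rpow_le_rpow (norm_nonneg _) (norm_fst_le v) hr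
  have hy : ‖v.2‖ ^ s ≤ ‖v‖ ^ s := Real.rpow_le_rpow (norm_nonneg _) (norm_snd_le v) hs
  calc ‖uncurry B v‖ ≤ θ * ‖v.1‖ ^ r * ‖v.2‖ ^ s := h v.1 v.2
    _ ≤ |θ| * ‖v.1‖ ^ r * ‖v.2‖ ^ s := by gcongr; exact le_abs_self θ
    _ ≤ |θ| * ‖v‖ ^ r * ‖v‖ ^ s := by gcongr
    _ = |θ| * ‖‖v‖ ^ (r + s)‖ := by
      rw [Real.norm_of_nonneg (by positivity), Real.rpow_add_of_nonneg (norm_nonneg _) hr hs,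
        mul_assoc]

variable [NormedSpace ℝ E] [NormedSpace ℝ Y]

theorem norm_inv_pow_smul_rpow (a : ℝ) (k : ℕ) (v : E) :
    ‖(a ^ k)⁻¹ • v‖ ^ p = ((|a| ^ p) ^ k)⁻¹ * ‖v‖ ^ p := by
  rw [norm_smul, Real.mul_rpow (norm_nonneg _) (norm_nonneg _), norm_inv, norm_pow,
    Real.norm_eq_abs, Real.inv_rpow (by positivity), ← Real.rpow_pow_comm (abs_nonneg a)]

theorem map_eq_pow_smul_map_inv_pow_smul {h : E → Y} {a c : ℝ} (ha : a ≠ 0)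
    (hh : ∀ v, h (a • v) = c • h v) (v : E) (k : ℕ) : h v = c ^ k • h ((a ^ k)⁻¹ • v) := by
  induction k with
  | zero => simp
  | succ k ih =>
    have e : a • (a ^ (k + 1))⁻¹ • v = (a ^ k)⁻¹ • v := by
      rw [pow_succ, mul_inv, mul_comm, ← smul_smul, smul_inv_smul₀ ha]
    rw [ih, ← e, hh, smul_smul, ← pow_succ]

theorem eq_zero_of_isBigO_of_map_smul {h : E → Y} {a c : ℝ} (ha : a ≠ 0) (hc : |c| < |a| ^ p)
    (hh : ∀ v, h (a • v) = c • h v) (hO : h =O[⊤] fun v => ‖v‖ ^ p) : h = 0 := by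
  obtain ⟨C, hC⟩ := isBigO_rpow_norm_iff.mp hO
  have hb : 0 < |a| ^ p := by positivity
  have hρ : |c| / |a| ^ p < 1 := (div_lt_one hb).mpr hc
  funext v
  have hbound (k : ℕ) : ‖h v‖ ≤ C * ‖v‖ ^ p * (|c| / |a| ^ p) ^ k := by
    rw [map_eq_pow_smul_map_inv_pow_smul ha hh v k, norm_smul, norm_pow, Real.norm_eq_abs]
    calc |c| ^ k * ‖h ((a ^ k)⁻¹ • v)‖ ≤ |c| ^ k * (C * ‖(a ^ k)⁻¹ • v‖ ^ p) := by
          gcongr; exact hC _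
      _ = C * ‖v‖ ^ p * (|c| / |a| ^ p) ^ k := by
          rw [norm_inv_pow_smul_rpow, div_pow]; field_simp
  have hlim : Tendsto (fun k : ℕ => C * ‖v‖ ^ p * (|c| / |a| ^ p) ^ k) atTop (𝓝 0) := by
    simpa using (tendsto_pow_atTop_nhds_zero_of_lt_one (by positivity) hρ).const_mul
      (C * ‖v‖ ^ p)
  exact norm_le_zero_iff.mp (ge_of_tendsto' hlim hbound)

theorem exists_map_smul_eq_and_isBigO_sub [CompleteSpace Y] {g : E → Y} {a c : ℝ} (ha : a ≠ 0)
    (hc : |c| < |a| ^ p) (hg : (fun v => g (a • v) - c • g v) =O[⊤] fun v => ‖v‖ ^ p) :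
    ∃ G : E → Y, (∀ v, G (a • v) = c • G v) ∧ (fun v => g v - G v) =O[⊤] fun v => ‖v‖ ^ p := by
  obtain ⟨C, hC⟩ := isBigO_rpow_norm_iff.mp hg
  have hb : 0 < |a| ^ p := by positivity
  set ρ := |c| / |a| ^ p
  have hρ : ρ < 1 := (div_lt_one hb).mpr hc
  set s : ℕ → E → Y := fun k v => c ^ k • g ((a ^ k)⁻¹ • v)
  have hstep (v : E) (k : ℕ) : dist (s k v) (s (k + 1) v) ≤ C * ‖v‖ ^ p / |a| ^ p * ρ ^ k := by
    have e : a • (a ^ (k + 1))⁻¹ • v = (a ^ k)⁻¹ • v := by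
      rw [pow_succ, mul_inv, mul_comm, ← smul_smul, smul_inv_smul₀ ha]
    have hdiff : s k v - s (k + 1) v =
        c ^ k • (g (a • (a ^ (k + 1))⁻¹ • v) - c • g ((a ^ (k + 1))⁻¹ • v)) := by
      rw [e, smul_sub, smul_smul, ← pow_succ]
    rw [dist_eq_norm, hdiff, norm_smul, norm_pow, Real.norm_eq_abs]
    calc |c| ^ k * ‖g (a • (a ^ (k + 1))⁻¹ • v) - c • g ((a ^ (k + 1))⁻¹ • v)‖
        ≤ |c| ^ k * (C * ‖(a ^ (k + 1))⁻¹ • v‖ ^ p) := by gcongr; exact hC _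
      _ = C * ‖v‖ ^ p / |a| ^ p * ρ ^ k := by
        rw [norm_inv_pow_smul_rpow, div_pow, pow_succ]; field_simp
  choose G hG using fun v => cauchySeq_tendsto_of_complete
    (cauchySeq_of_le_geometric ρ _ hρ (hstep v))
  refine ⟨G, fun v => ?_, isBigO_rpow_norm_iff.mpr ⟨C / (|a| ^ p - |c|), fun v => ?_⟩⟩
  · have hshift (k : ℕ) : s (k + 1) (a • v) = c • s k v := by
      have e : (a ^ (k + 1))⁻¹ • a • v = (a ^ k)⁻¹ • v := by
        rw [smul_smul, pow_succ, mul_inv, mul_assoc, inv_mul_cancel₀ ha, mul_one]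
      simp only [s]
      rw [e, pow_succ', mul_smul]
    have h1 := (hG (a • v)).comp (tendsto_add_atTop_nat 1)
    simp only [comp_def, hshift] at h1
    exact tendsto_nhds_unique h1 ((hG v).const_smul c)
  · have hd := dist_le_of_le_geometric_of_tendsto₀ ρ _ hρ (hstep v) (hG v)
    simp only [s, pow_zero, inv_one, one_smul, dist_eq_norm] at hd
    refine hd.trans_eq ?_
    have : |a| ^ p - |c| ≠ 0 := by linarith
    simp only [ρ]
    field_simp

theorem eq_zero_of_isBigO_add_of_map_smul {h₁ h₂ : E → Y} {a c₁ c₂ : ℝ} (hp : 0 ≤ p)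
    (ha : a ≠ 0) (hc : c₁ ≠ c₂) (hc₁ : |c₁| < |a| ^ p) (hc₂ : |c₂| < |a| ^ p)
    (hh₁ : ∀ v, h₁ (a • v) = c₁ • h₁ v) (hh₂ : ∀ v, h₂ (a • v) = c₂ • h₂ v)
    (hO : (fun v => h₁ v + h₂ v) =O[⊤] fun v => ‖v‖ ^ p) : h₁ = 0 ∧ h₂ = 0 := by
  have hsmul : (fun v : E => a • v) =O[⊤] fun v => v := (isBigO_refl _ _).const_smul_left a
  have h₁O : h₁ =O[⊤] fun v => ‖v‖ ^ p := by
    refine (((hO.comp_of_isBigO_id hp hsmul).sub (hO.const_smul_left c₂)).const_smul_left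
      (c₁ - c₂)⁻¹).congr_left fun v => ?_
    have e : h₁ (a • v) + h₂ (a • v) - c₂ • (h₁ v + h₂ v) = (c₁ - c₂) • h₁ v := by
      rw [hh₁, hh₂]; module
    simp only [Pi.smul_apply, e, inv_smul_smul₀ (sub_ne_zero.mpr hc)]
  have h₁0 := eq_zero_of_isBigO_of_map_smul ha hc₁ hh₁ h₁O
  exact ⟨h₁0, eq_zero_of_isBigO_of_map_smul ha hc₂ hh₂ (hO.congr_left fun v => by simp [h₁0])⟩

end DirectMethod

section Stability

variable {X Y : Type*} [NormedAddCommGroup X] [NormedAddCommGroup Y] [NormedSpace ℝ Y]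
  {g : X → Y} {ν p : ℝ}

theorem isBigO_uncurry_quadDefect {h : X → Y} (hp : 0 ≤ p) (hh : h =O[⊤] fun v => ‖v‖ ^ p) :
    uncurry (quadDefect h) =O[⊤] fun v => ‖v‖ ^ p := by
  have t₁ : (fun v : X × X => h (v.1 + v.2)) =O[⊤] fun v => ‖v‖ ^ p :=
    hh.comp_of_isBigO_id hp (isBigO_fst_prod'.add isBigO_snd_prod')
  have t₂ : (fun v : X × X => h (v.1 - v.2)) =O[⊤] fun v => ‖v‖ ^ p :=
    hh.comp_of_isBigO_id hp (isBigO_fst_prod'.sub isBigO_snd_prod')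
  have t₃ : (fun v : X × X => h v.1) =O[⊤] fun v => ‖v‖ ^ p :=
    hh.comp_of_isBigO_id hp isBigO_fst_prod'
  have t₄ : (fun v : X × X => h v.2) =O[⊤] fun v => ‖v‖ ^ p :=
    hh.comp_of_isBigO_id hp isBigO_snd_prod'
  exact ((t₁.add t₂).sub (t₃.const_smul_left 2)).sub (t₄.const_smul_left 2)

variable [NormedSpace ℝ X]

theorem isBigO_uncurry_quarticDefect {h : X → Y} (hp : 0 ≤ p)
    (hh : h =O[⊤] fun v => ‖v‖ ^ p) : uncurry (quarticDefect h) =O[⊤] fun v => ‖v‖ ^ p := by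
  have hfst : (fun v : X × X => v.1) =O[⊤] fun v => v := isBigO_fst_prod'
  have hsnd : (fun v : X × X => v.2) =O[⊤] fun v => v := isBigO_snd_prod'
  have t₁ : (fun v : X × X => h ((2 : ℝ) • v.1 + v.2)) =O[⊤] fun v => ‖v‖ ^ p :=
    hh.comp_of_isBigO_id hp ((hfst.const_smul_left 2).add hsnd)
  have t₂ : (fun v : X × X => h ((2 : ℝ) • v.1 - v.2)) =O[⊤] fun v => ‖v‖ ^ p :=
    hh.comp_of_isBigO_id hp ((hfst.const_smul_left 2).sub hsnd)
  have t₃ : (fun v : X × X => h (v.1 + v.2)) =O[⊤] fun v => ‖v‖ ^ p :=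
    hh.comp_of_isBigO_id hp (hfst.add hsnd)
  have t₄ : (fun v : X × X => h (v.1 - v.2)) =O[⊤] fun v => ‖v‖ ^ p :=
    hh.comp_of_isBigO_id hp (hfst.sub hsnd)
  exact (((((t₁.add t₂).sub (t₃.const_smul_left 4)).sub (t₄.const_smul_left 4)).sub
    ((hh.comp_of_isBigO_id hp hfst).const_smul_left 24)).add
    ((hh.comp_of_isBigO_id hp hsnd).const_smul_left 6))

theorem isBigO_quadDefect_of_uncurry {B : X → X → Y} (hp : 0 ≤ p)
    (hB : uncurry B =O[⊤] fun v => ‖v‖ ^ p) (c : ℝ) :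
    (fun v : X × X => quadDefect (B v.1) v.2 (c • v.1)) =O[⊤] fun v => ‖v‖ ^ p := by
  have hfst : (fun v : X × X => v.1) =O[⊤] fun v => v := isBigO_fst_prod'
  have hsnd : (fun v : X × X => v.2) =O[⊤] fun v => v := isBigO_snd_prod'
  have t₁ : (fun v : X × X => B v.1 (v.2 + c • v.1)) =O[⊤] fun v => ‖v‖ ^ p :=
    hB.comp_of_isBigO_id hp (hfst.prod_left (hsnd.add (hfst.const_smul_left c)))
  have t₂ : (fun v : X × X => B v.1 (v.2 - c • v.1)) =O[⊤] fun v => ‖v‖ ^ p :=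
    hB.comp_of_isBigO_id hp (hfst.prod_left (hsnd.sub (hfst.const_smul_left c)))
  have t₄ : (fun v : X × X => B v.1 (c • v.1)) =O[⊤] fun v => ‖v‖ ^ p :=
    hB.comp_of_isBigO_id hp (hfst.prod_left (hfst.const_smul_left c))
  exact ((t₁.add t₂).sub (hB.const_smul_left 2)).sub (t₄.const_smul_left 2)

theorem isBigO_quadDefect_two_smul_sub (hg : g.Even) (h0 : g 0 = 0) (hν : ν ^ 4 - ν ^ 2 ≠ 0)
    (hp : 0 ≤ p) (hE : uncurry (nDefect g ν) =O[⊤] fun v => ‖v‖ ^ p) :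
    (fun v : X × X => quadDefect g ((2 : ℝ) • v.1) v.2 - (4 : ℝ) • quadDefect g v.1 v.2)
      =O[⊤] fun v => ‖v‖ ^ p := by
  have hfst : (fun v : X × X => v.1) =O[⊤] fun v => v := isBigO_fst_prod'
  have t₁ : (fun v : X × X => nDefect g ν ((2 : ℝ) • v.1) v.2) =O[⊤] fun v => ‖v‖ ^ p :=
    hE.comp_of_isBigO_id hp ((hfst.const_smul_left 2).prod_left isBigO_snd_prod')
  refine ((((t₁.sub (hE.const_smul_left (4 : ℝ))).sub
    ((isBigO_quadDefect_of_uncurry hp hE 1).const_smul_left (ν ^ 2))).sub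
    (isBigO_quadDefect_of_uncurry hp hE ν)).const_smul_left (ν ^ 4 - ν ^ 2)⁻¹).congr_left
    fun v => ?_
  simp only [Pi.smul_apply, uncurry_def, one_smul]
  rw [← smul_quadDefect_two_smul_sub hg h0, inv_smul_smul₀ hν]

theorem isBigO_quadDefect_natCast_smul_sub (hg : g.Even) (h0 : g 0 = 0) (hp : 0 ≤ p)
    (hA : (fun v : X × X => quadDefect g ((2 : ℝ) • v.1) v.2 - (4 : ℝ) • quadDefect g v.1 v.2)
      =O[⊤] fun v => ‖v‖ ^ p) (j : ℕ) :
    (fun x => quadDefect g ((j : ℝ) • x) x - ((j : ℝ) ^ 2) • quadDefect g x x)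
      =O[⊤] fun x => ‖x‖ ^ p := by
  refine isBigO_of_isBigO_second_difference (u := fun (j : ℕ) x =>
    quadDefect g ((j : ℝ) • x) x - ((j : ℝ) ^ 2) • quadDefect g x x)
    ((isBigO_zero _ _).congr_left fun x => ?_) ((isBigO_zero _ _).congr_left fun x => ?_)
    (fun k => ?_) j
  · simp [quadDefect_zero_left hg h0]
  · simp
  · refine (hA.comp_of_isBigO_id hp ((isBigO_refl _ _).prod_left
      ((isBigO_refl _ _).const_smul_left ((k : ℝ) + 1)))).congr_left fun x => ?_
    simp only [Pi.smul_apply, quadDefect_two_smul_smul_sub hg h0, add_sub_cancel_right, add_assoc,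
      one_add_one_eq_two]
    push_cast
    module

theorem isBigO_sub_sub_quadDefect_self (h0 : g 0 = 0)
    (hD : ∀ j : ℕ, (fun x => quadDefect g ((j : ℝ) • x) x - ((j : ℝ) ^ 2) • quadDefect g x x)
      =O[⊤] fun x => ‖x‖ ^ p) (j : ℕ) :
    (fun x => g ((j : ℝ) • x) - (j : ℝ) ^ 2 • g x
      - (((j : ℝ) ^ 4 - (j : ℝ) ^ 2) / 12) • quadDefect g x x) =O[⊤] fun x => ‖x‖ ^ p := by
  refine isBigO_of_isBigO_second_difference (u := fun (j : ℕ) x => g ((j : ℝ) • x)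
    - (j : ℝ) ^ 2 • g x - (((j : ℝ) ^ 4 - (j : ℝ) ^ 2) / 12) • quadDefect g x x)
    ((isBigO_zero _ _).congr_left fun x => ?_) ((isBigO_zero _ _).congr_left fun x => ?_)
    (fun k => (hD (k + 1)).congr_left fun x => ?_) j
  · simp [h0]
  · simp
  · rw [quadDefect_smul_left_self]
    push_cast
    rw [add_sub_cancel_right, add_assoc, one_add_one_eq_two]
    module

-- `n` has to be an integer: the second differences are summed along `x, 2x, …, |n|x`.
theorem isBigO_quarticPart_sub (hg : g.Even) (h0 : g 0 = 0) (hp : 0 ≤ p)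
    (hA : (fun v : X × X => quadDefect g ((2 : ℝ) • v.1) v.2 - (4 : ℝ) • quadDefect g v.1 v.2)
      =O[⊤] fun v => ‖v‖ ^ p) {n : ℤ} (hn : (n : ℝ) ^ 4 - (n : ℝ) ^ 2 ≠ 0) :
    (fun x => quarticPart g n x - (12 : ℝ)⁻¹ • quadDefect g x x) =O[⊤] fun x => ‖x‖ ^ p := by
  have hw := isBigO_sub_sub_quadDefect_self h0
    (isBigO_quadDefect_natCast_smul_sub hg h0 hp hA) n.natAbs
  have hcast : ((n.natAbs : ℕ) : ℝ) = |(n : ℝ)| := by rw [Nat.cast_natAbs, Int.cast_abs]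
  have hgn (x : X) : g (|(n : ℝ)| • x) = g ((n : ℝ) • x) := by
    rcases abs_choice (n : ℝ) with h | h <;> rw [h]
    rw [neg_smul, hg]
  simp only [hcast, hgn, sq_abs, Even.pow_abs (by decide : Even 4)] at hw
  refine (hw.const_smul_left ((n : ℝ) ^ 4 - (n : ℝ) ^ 2)⁻¹).congr_left fun x => ?_
  rw [Pi.smul_apply, smul_sub, smul_smul, quarticPart,
    inv_mul_eq_div, div_div_cancel_left' hn]

theorem isBigO_quarticPart_smul_sub (hg : g.Even) (hp : 0 ≤ p)
    (hE : uncurry (nDefect g ν) =O[⊤] fun v => ‖v‖ ^ p)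
    (hτ : (fun x => quarticPart g ν x - (12 : ℝ)⁻¹ • quadDefect g x x) =O[⊤] fun x => ‖x‖ ^ p) :
    (fun x => quarticPart g ν (ν • x) - ν ^ 4 • quarticPart g ν x) =O[⊤] fun x => ‖x‖ ^ p := by
  have hid : (fun x : X => x) =O[⊤] fun x => x := isBigO_refl _ _
  have t₁ : (fun x => nDefect g ν x (ν • x)) =O[⊤] fun x => ‖x‖ ^ p :=
    hE.comp_of_isBigO_id hp (hid.prod_left (hid.const_smul_left ν))
  have t₂ : (fun x => nDefect g ν x x) =O[⊤] fun x => ‖x‖ ^ p :=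
    hE.comp_of_isBigO_id hp (hid.prod_left hid)
  refine (((hτ.comp_of_isBigO_id hp (hid.const_smul_left ν)).sub (hτ.const_smul_left (ν ^ 4))).add
    ((t₁.add (t₂.const_smul_left (ν ^ 2))).const_smul_left (12 : ℝ)⁻¹)).congr_left fun x => ?_
  simp only [Pi.smul_apply, quadDefect_smul_smul hg]
  module

theorem isBigO_quadDefect_sub_quarticPart (hg : g.Even) (hν : ν ^ 4 - ν ^ 2 ≠ 0) (hp : 0 ≤ p)
    (hE : uncurry (nDefect g ν) =O[⊤] fun v => ‖v‖ ^ p) :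
    uncurry (quadDefect fun x => g x - quarticPart g ν x) =O[⊤] fun v => ‖v‖ ^ p := by
  have hfst : (fun v : X × X => v.1) =O[⊤] fun v => v := isBigO_fst_prod'
  have hsnd : (fun v : X × X => v.2) =O[⊤] fun v => v := isBigO_snd_prod'
  have t₁ : (fun v : X × X => nDefect g ν v.1 (ν • v.2)) =O[⊤] fun v => ‖v‖ ^ p :=
    hE.comp_of_isBigO_id hp (hfst.prod_left (hsnd.const_smul_left ν))
  have t₂ : (fun v : X × X => nDefect g ν v.2 v.1) =O[⊤] fun v => ‖v‖ ^ p :=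
    hE.comp_of_isBigO_id hp (hsnd.prod_left hfst)
  refine ((t₁.add (t₂.const_smul_left (ν ^ 2))).const_smul_left (-(ν ^ 4 - ν ^ 2)⁻¹)).congr_left
    fun v => ?_
  simp only [Pi.smul_apply, uncurry_def, quadDefect_sub, quadDefect_quarticPart hg hν]
  module

theorem isBigO_quarticDefect_quarticPart (hg : g.Even) (h0 : g 0 = 0) (hν : ν ^ 4 - ν ^ 2 ≠ 0)
    (hp : 0 ≤ p) (hE : uncurry (nDefect g ν) =O[⊤] fun v => ‖v‖ ^ p)
    (hτ : (fun x => quarticPart g ν x - (12 : ℝ)⁻¹ • quadDefect g x x) =O[⊤] fun x => ‖x‖ ^ p) :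
    uncurry (quarticDefect (quarticPart g ν)) =O[⊤] fun v => ‖v‖ ^ p := by
  set q := fun x => g x - quarticPart g ν x
  have hq0 : q 0 = 0 := by simp [q, quarticPart, h0]
  have hq := isBigO_quadDefect_sub_quarticPart hg hν hp hE
  have hfst : (fun v : X × X => v.1) =O[⊤] fun v => v := isBigO_fst_prod'
  have hsnd : (fun v : X × X => v.2) =O[⊤] fun v => v := isBigO_snd_prod'
  have t₁ : (fun v : X × X => quadDefect q ((2 : ℝ) • v.1) v.2) =O[⊤] fun v => ‖v‖ ^ p :=
    hq.comp_of_isBigO_id hp ((hfst.const_smul_left 2).prod_left hsnd)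
  have t₂ : (fun v : X × X => quadDefect q v.1 v.1) =O[⊤] fun v => ‖v‖ ^ p :=
    hq.comp_of_isBigO_id hp (hfst.prod_left hfst)
  refine (((isBigO_quadDefect_two_smul_sub hg h0 hν hp hE).sub
    ((hτ.comp_of_isBigO_id hp hfst).const_smul_left (24 : ℝ))).sub
    ((t₁.sub (hq.const_smul_left (4 : ℝ))).add (t₂.const_smul_left (2 : ℝ)))).congr_left fun v => ?_
  have hsplit : quarticDefect (quarticPart g ν) v.1 v.2 =
      quarticDefect g v.1 v.2 - quarticDefect q v.1 v.2 := by
    rw [quarticDefect_sub]; abel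
  simp only [Pi.smul_apply, uncurry_def, hsplit, quarticDefect_eq_quadDefect h0,
    quarticDefect_eq_quadDefect hq0]
  simp only [q]
  module

theorem quadDefect_eq_zero_of_isBigO {q Q : X → Y} {a c : ℝ} (hp : 0 ≤ p) (ha : a ≠ 0)
    (hc : |c| < |a| ^ p) (hQ : ∀ v, Q (a • v) = c • Q v)
    (hq : uncurry (quadDefect q) =O[⊤] fun v => ‖v‖ ^ p)
    (hqQ : (fun v => q v - Q v) =O[⊤] fun v => ‖v‖ ^ p) (x y : X) : quadDefect Q x y = 0 := by
  have hO : uncurry (quadDefect Q) =O[⊤] fun v => ‖v‖ ^ p :=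
    (hq.sub (isBigO_uncurry_quadDefect hp hqQ)).congr_left fun v => by
      simp only [uncurry_def, quadDefect_sub]; abel
  exact congrFun (eq_zero_of_isBigO_of_map_smul ha hc
    (fun v => quadDefect_smul_smul_of_map_smul hQ v.1 v.2) hO) (x, y)

theorem quarticDefect_eq_zero_of_isBigO {t T : X → Y} {a c : ℝ} (hp : 0 ≤ p) (ha : a ≠ 0)
    (hc : |c| < |a| ^ p) (hT : ∀ v, T (a • v) = c • T v)
    (ht : uncurry (quarticDefect t) =O[⊤] fun v => ‖v‖ ^ p)
    (htT : (fun v => t v - T v) =O[⊤] fun v => ‖v‖ ^ p) (x y : X) : quarticDefect T x y = 0 := by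
  have hO : uncurry (quarticDefect T) =O[⊤] fun v => ‖v‖ ^ p :=
    (ht.sub (isBigO_uncurry_quarticDefect hp htT)).congr_left fun v => by
      simp only [uncurry_def, quarticDefect_sub]; abel
  exact congrFun (eq_zero_of_isBigO_of_map_smul ha hc
    (fun v => quarticDefect_smul_smul_of_map_smul hT v.1 v.2) hO) (x, y)

theorem exists_quadratic_quartic_isBigO [CompleteSpace Y] (hg : g.Even) (h0 : g 0 = 0) {n : ℤ}
    (hn : 2 ≤ |n|) (hp : 4 < p) (hE : uncurry (nDefect g n) =O[⊤] fun v => ‖v‖ ^ p) :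
    ∃ Q T : X → Y, (∀ x y, quadDefect Q x y = 0) ∧ (∀ x y, quarticDefect T x y = 0) ∧
      (fun x => g x - Q x - T x) =O[⊤] fun x => ‖x‖ ^ p := by
  set ν : ℝ := (n : ℝ)
  have hν : 2 ≤ |ν| := by rw [← Int.cast_abs]; exact_mod_cast hn
  have hν0 : ν ≠ 0 := abs_pos.mp (by linarith)
  have hν4 : |ν ^ 4| < |ν| ^ p := by
    rw [abs_pow, ← Real.rpow_natCast]
    exact Real.rpow_lt_rpow_of_exponent_lt (by linarith) (by norm_num; linarith)
  have hν2 : |ν ^ 2| < |ν| ^ p := by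
    refine lt_of_le_of_lt ?_ hν4
    rw [abs_pow, abs_pow]
    exact pow_le_pow_right₀ (by linarith) (by norm_num)
  have hsq : 4 ≤ ν ^ 2 := by rw [← sq_abs]; nlinarith
  have hν42 : ν ^ 4 - ν ^ 2 ≠ 0 := ne_of_gt (by nlinarith)
  have hp0 : 0 ≤ p := by linarith
  have hτ := isBigO_quarticPart_sub hg h0 hp0
    (isBigO_quadDefect_two_smul_sub hg h0 hν42 hp0 hE) hν42
  have ht := isBigO_quarticPart_smul_sub hg hp0 hE hτ
  obtain ⟨T, hTν, hT⟩ := exists_map_smul_eq_and_isBigO_sub hν0 hν4 ht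
  obtain ⟨Q, hQν, hQ⟩ := exists_map_smul_eq_and_isBigO_sub
    (g := fun x => g x - quarticPart g ν x) hν0 hν2 (ht.neg_left.congr_left fun x => by
      linear_combination (norm := module) smul_quarticPart (g := g) hν42 x)
  exact ⟨Q, T, quadDefect_eq_zero_of_isBigO hp0 hν0 hν2 hQν
    (isBigO_quadDefect_sub_quarticPart hg hν42 hp0 hE) hQ,
    quarticDefect_eq_zero_of_isBigO hp0 hν0 hν4 hTν
    (isBigO_quarticDefect_quarticPart hg h0 hν42 hp0 hE hτ) hT,
    (hQ.add hT).congr_left fun x => by abel⟩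

theorem eq_of_isBigO_sub_sub {Q T Q' T' : X → Y} (hp : 4 < p)
    (hQ : ∀ x y, quadDefect Q x y = 0) (hT : ∀ x y, quarticDefect T x y = 0)
    (hQ' : ∀ x y, quadDefect Q' x y = 0) (hT' : ∀ x y, quarticDefect T' x y = 0)
    (h : (fun x => g x - Q x - T x) =O[⊤] fun x => ‖x‖ ^ p)
    (h' : (fun x => g x - Q' x - T' x) =O[⊤] fun x => ‖x‖ ^ p) : Q = Q' ∧ T = T' := by
  have h16 : |(16 : ℝ)| < |(2 : ℝ)| ^ p := by
    rw [abs_two, abs_of_pos (by norm_num), show (16 : ℝ) = 2 ^ (4 : ℝ) by norm_num]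
    exact Real.rpow_lt_rpow_of_exponent_lt (by norm_num) hp
  obtain ⟨hQQ, hTT⟩ := eq_zero_of_isBigO_add_of_map_smul (h₁ := fun x => Q x - Q' x)
    (h₂ := fun x => T x - T' x) (by linarith) two_ne_zero (by norm_num : (4 : ℝ) ≠ 16)
    (lt_trans (by norm_num) h16) h16
    (fun v => by
      rw [map_two_smul_of_quadDefect_eq_zero hQ, map_two_smul_of_quadDefect_eq_zero hQ', smul_sub])
    (fun v => by
      rw [map_two_smul_of_quarticDefect_eq_zero hT, map_two_smul_of_quarticDefect_eq_zero hT',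
        smul_sub])
    ((h'.sub h).congr_left fun x => by abel)
  exact ⟨funext fun x => sub_eq_zero.mp (congrFun hQQ x),
    funext fun x => sub_eq_zero.mp (congrFun hTT x)⟩

end Stability

theorem stmt_17_general {X Y : Type*} [NormedAddCommGroup X] [NormedSpace ℝ X]
    [NormedAddCommGroup Y] [NormedSpace ℝ Y] [CompleteSpace Y]
    (n : ℤ) (hn0 : n ≠ 0) (hn1 : n ≠ 1) (hn2 : n ≠ -1)
    (θ r s : ℝ) (hr : 0 < r) (hs : 0 < s) (hrs : 4 < r + s)
    (f : X → Y) (h0 : f 0 = 0)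
    (hf : ∀ x y : X, ‖f (n • x + y) + f (n • x - y) - (n ^ 2) • f (x + y)
        - (n ^ 2) • f (x - y) - (2 : ℤ) • f (n • x) + (2 * n ^ 2) • f x
        + (2 * (n ^ 2 - 1)) • f y‖ ≤ θ * ‖x‖ ^ r * ‖y‖ ^ s) :
    ∃! QT : (X → Y) × (X → Y),
      (∀ x y : X, QT.1 (x + y) + QT.1 (x - y) = (2 : ℤ) • QT.1 x + (2 : ℤ) • QT.1 y) ∧
      (∀ x y : X, QT.2 ((2 : ℤ) • x + y) + QT.2 ((2 : ℤ) • x - y) =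
        (4 : ℤ) • QT.2 (x + y) + (4 : ℤ) • QT.2 (x - y) + (24 : ℤ) • QT.2 x - (6 : ℤ) • QT.2 y) ∧
      (∃ K : ℝ, ∀ x : X, ‖f x - QT.1 x - QT.2 x‖ ≤ K * ‖x‖ ^ (r + s)) := by
  have hn : 2 ≤ |n| := by rcases abs_cases n with ⟨h, _⟩ | ⟨h, _⟩ <;> omega
  have hn' : (n : ℝ) ^ 2 ≠ 1 := by
    have : (2 : ℝ) ≤ |(n : ℝ)| := by rw [← Int.cast_abs]; exact_mod_cast hn
    nlinarith [sq_abs (n : ℝ)]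
  have hE (x y : X) : ‖nDefect f n x y‖ ≤ θ * ‖x‖ ^ r * ‖y‖ ^ s := by
    rw [nDefect_intCast]; exact hf x y
  have hf_even : f.Even := even_of_nDefect_zero_left hn' h0 fun y =>
    norm_le_zero_iff.mp ((hE 0 y).trans_eq (by rw [norm_zero, Real.zero_rpow hr.ne']; ring))
  obtain ⟨Q, T, hQ, hT, hQT⟩ :=
    exists_quadratic_quartic_isBigO hf_even h0 hn hrs (isBigO_uncurry_of_norm_le hr.le hs.le hE)
  refine ⟨(Q, T), ⟨fun x y => quadDefect_eq_zero_iff.mp (hQ x y),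
    fun x y => quarticDefect_eq_zero_iff.mp (hT x y), isBigO_rpow_norm_iff.mp hQT⟩, ?_⟩
  rintro ⟨Q', T'⟩ ⟨hQ', hT', hK'⟩
  obtain ⟨rfl, rfl⟩ := eq_of_isBigO_sub_sub hrs hQ hT
    (fun x y => quadDefect_eq_zero_iff.mpr (hQ' x y))
    (fun x y => quarticDefect_eq_zero_iff.mpr (hT' x y)) hQT (isBigO_rpow_norm_iff.mpr hK')
  rfl

theorem stmt_17 {X Y : Type*} [NormedAddCommGroup X] [NormedSpace ℝ X]
    [NormedAddCommGroup Y] [NormedSpace ℝ Y] [CompleteSpace Y]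
    (n : ℤ) (hn0 : n ≠ 0) (hn1 : n ≠ 1) (hn2 : n ≠ -1)
    (θ r s : ℝ) (hθ : 0 ≤ θ) (hr : 0 < r) (hs : 0 < s) (hrs : 4 < r + s)
    (f : X → Y) (h0 : f 0 = 0)
    (hf : ∀ x y : X, ‖f (n • x + y) + f (n • x - y) - (n ^ 2) • f (x + y)
        - (n ^ 2) • f (x - y) - (2 : ℤ) • f (n • x) + (2 * n ^ 2) • f x
        + (2 * (n ^ 2 - 1)) • f y‖ ≤ θ * ‖x‖ ^ r * ‖y‖ ^ s) :
    ∃! QT : (X → Y) × (X → Y),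
      (∀ x y : X, QT.1 (x + y) + QT.1 (x - y) = (2 : ℤ) • QT.1 x + (2 : ℤ) • QT.1 y) ∧
      (∀ x y : X, QT.2 ((2 : ℤ) • x + y) + QT.2 ((2 : ℤ) • x - y) =
        (4 : ℤ) • QT.2 (x + y) + (4 : ℤ) • QT.2 (x - y) + (24 : ℤ) • QT.2 x - (6 : ℤ) • QT.2 y) ∧
      (∃ K : ℝ, ∀ x : X, ‖f x - QT.1 x - QT.2 x‖ ≤ K * ‖x‖ ^ (r + s)) :=
  stmt_17_general n hn0 hn1 hn2 θ r s hr hs hrs f h0 hf
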